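/- arXiv:1309.7884 — 4 statements merged into one kernel-verified Lean document; each statement's English description precedes it below -/
import Mathlib

section
/- Let q be an odd positive integer and let ι be an automorphism of the cyclic group ZMod q satisfying ι ∘ ι = id. Let H = {x : ZMod q | ι x = x} be the fixed-point subgroup of ι and let m be the cardinality of H. Then m divides q and m is coprime to q / m. -/
/-- Let `q` be an odd positive integer and let `ι` be an automorphism of the
cyclic group `ZMod q` satisfying `ι ∘ ι = id`. Let `m` be the cardinality of the fixed-point
subgroup `{x | ι x = x}` of `ι`. Then `m` divides `q` and `m` is coprime to `q / m`. -/
theorem fixed_point_subgroup_card_dvd_and_coprime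
    (q : ℕ) (hq : 0 < q) (hodd : Odd q)
    (ι : ZMod q ≃+ ZMod q) (hι : ∀ x : ZMod q, ι (ι x) = x)
    (m : ℕ) (hm : m = Nat.card {x : ZMod q // ι x = x}) :
    m ∣ q ∧ Nat.Coprime m (q / m) := by
  haveI : NeZero q := ⟨hq.ne'⟩
  classical
  -- the "division by 2" trick
  set k : ℕ := (q + 1) / 2 with hk
  have hk2 : k * 2 = q + 1 := Nat.div_mul_cancel (by
    obtain ⟨t, ht⟩ := hodd; omega)
  have hq1 : ∀ x : ZMod q, (q + 1) • x = x := by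
    intro x
    have : (q : ZMod q) = 0 := ZMod.natCast_self q
    rw [add_smul, one_smul, ← Nat.cast_smul_eq_nsmul (ZMod q), this, zero_smul, zero_add]
  have half : ∀ x : ZMod q, 2 • x = 0 → x = 0 := by
    intro x hx
    have : k • (2 • x) = x := by rw [smul_smul, hk2, hq1]
    rw [hx, smul_zero] at this; exact this.symm
  -- fixed point subgroup
  let H : AddSubgroup (ZMod q) :=
    { carrier := {x | ι x = x}
      add_mem' := fun {a b} ha hb => by simp only [Set.mem_setOf_eq, map_add] at *; rw [ha, hb]
      zero_mem' := by simp
      neg_mem' := fun {a} ha => by simp only [Set.mem_setOf_eq, map_neg] at *; rw [ha] }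
  have hmH : m = Nat.card H := hm
  -- the norm map
  let f : ZMod q →+ ZMod q := AddMonoidHom.id _ + ι.toAddMonoidHom
  have hf : ∀ x, f x = x + ι x := fun x => rfl
  have hrange : f.range = H := by
    apply le_antisymm
    · rintro _ ⟨x, rfl⟩
      show ι (x + ι x) = x + ι x
      rw [map_add, hι, add_comm]
    · intro h hh
      refine ⟨k • h, ?_⟩
      have hh' : ι h = h := hh
      rw [hf, map_nsmul, hh', ← two_nsmul, smul_smul, mul_comm 2 k, hk2, hq1]
  have hcard : q = m * Nat.card f.ker := by
    have h1 := AddSubgroup.card_eq_card_quotient_mul_card_addSubgroup f.ker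
    have h2 : Nat.card (ZMod q ⧸ f.ker) = m := by
      rw [hmH, ← hrange]
      exact Nat.card_congr (QuotientAddGroup.quotientKerEquivRange f).toEquiv
    rw [h2, Nat.card_zmod] at h1; exact h1
  have hmpos : 0 < m := by
    rw [hmH]; exact Nat.card_pos
  have hdiv : q / m = Nat.card f.ker := by
    conv_lhs => rw [hcard]
    exact Nat.mul_div_cancel_left _ hmpos
  have hmdvd : m ∣ q := ⟨Nat.card f.ker, hcard⟩
  refine ⟨hmdvd, ?_⟩
  -- coprimality
  by_contra hcop
  obtain ⟨p, hp, hpdvd⟩ := Nat.exists_prime_and_dvd hcop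
  haveI : Fact p.Prime := ⟨hp⟩
  have hpm : p ∣ m := hpdvd.trans (Nat.gcd_dvd_left _ _)
  have hpk : p ∣ Nat.card f.ker := hdiv ▸ hpdvd.trans (Nat.gcd_dvd_right _ _)
  -- Cauchy in H
  obtain ⟨a', ha'⟩ := exists_prime_addOrderOf_dvd_card (G := H) p
    (by rw [← Nat.card_eq_fintype_card, ← hmH]; exact hpm)
  obtain ⟨b', hb'⟩ := exists_prime_addOrderOf_dvd_card (G := f.ker) p
    (by rw [← Nat.card_eq_fintype_card]; exact hpk)
  set a : ZMod q := (a' : ZMod q)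
  set b : ZMod q := (b' : ZMod q)
  have ha : addOrderOf a = p := by rw [AddSubgroup.addOrderOf_coe, ha']
  have hb : addOrderOf b = p := by rw [AddSubgroup.addOrderOf_coe, hb']
  -- b lies in the subgroup generated by a
  have hsub : (AddSubgroup.zmultiples a : Set (ZMod q)) ⊆ {x : ZMod q | p • x = 0} := by
    rintro _ ⟨n, rfl⟩
    simp only [Set.mem_setOf_eq]
    rw [smul_comm, ← ha, addOrderOf_nsmul_eq_zero, smul_zero]
  have hbmem : b ∈ AddSubgroup.zmultiples a := by
    have hle : (Finset.univ.filter (fun x : ZMod q => p • x = 0)).card ≤ p :=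
      IsAddCyclic.card_nsmul_eq_zero_le hp.pos
    have hsub' : (AddSubgroup.zmultiples a : Set (ZMod q)).toFinset ⊆
        Finset.univ.filter (fun x : ZMod q => p • x = 0) := by
      intro x hx
      rw [Set.mem_toFinset] at hx
      exact Finset.mem_filter.mpr ⟨Finset.mem_univ _, hsub hx⟩
    have hcard' : (AddSubgroup.zmultiples a : Set (ZMod q)).toFinset.card = p := by
      simp only [Set.toFinset_card, SetLike.coe_sort_coe, ← Nat.card_eq_fintype_card,
        Nat.card_zmultiples, ha]
    have := Finset.eq_of_subset_of_card_le hsub' (by omega)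
    have hbmem' : b ∈ Finset.univ.filter (fun x : ZMod q => p • x = 0) :=
      Finset.mem_filter.mpr ⟨Finset.mem_univ _, by rw [← hb]; exact addOrderOf_nsmul_eq_zero b⟩
    rw [← this, Set.mem_toFinset] at hbmem'
    exact hbmem'
  -- hence b ∈ H ∩ ker f, so 2b = 0, so b = 0
  have haH : a ∈ H := a'.2
  have hbH : b ∈ H := by
    have : AddSubgroup.zmultiples a ≤ H := by
      rw [AddSubgroup.zmultiples_le]; exact haH
    exact this hbmem
  have hbK : b + ι b = 0 := b'.2
  have hb0 : b = 0 := by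
    apply half
    have hbHeq : ι b = b := hbH
    rw [two_nsmul]
    nth_rewrite 2 [← hbHeq]
    exact hbK
  rw [hb0, addOrderOf_zero] at hb
  exact hp.one_lt.ne' hb.symm
end

section
/- Let q be an odd positive integer and let ι be an automorphism of ZMod q with ι ∘ ι = id. Let Γ be the semidirect product (ZMod q) ⋊ (ZMod 4) with respect to the homomorphism ZMod 4 → Aut(ZMod q) sending the generator 1 to ι. Let m be the order of the fixed-point subgroup {x | ι x = x} of ι. Then Γ is isomorphic as a group to the direct product (ZMod m) × ((ZMod (q/m)) ⋊ (ZMod 4)), where in the second factor the generator 1 of ZMod 4 acts on ZMod (q/m) by the inversion automorphism x ↦ -x. -/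
open Multiplicative

section Aux

variable {q : ℕ} (ι : ZMod q ≃+ ZMod q)

/-- The fixed-point subgroup of `ι`. -/
def fixSub : AddSubgroup (ZMod q) where
  carrier := {x | ι x = x}
  zero_mem' := map_zero ι
  add_mem' := fun ha hb => by
    simp only [Set.mem_setOf_eq, map_add] at *; rw [ha, hb]
  neg_mem' := fun ha => by
    simp only [Set.mem_setOf_eq, map_neg] at *; rw [ha]

/-- The anti-fixed-point subgroup of `ι`. -/
def negSub : AddSubgroup (ZMod q) where
  carrier := {x | ι x = -x}
  zero_mem' := by simp only [Set.mem_setOf_eq, map_zero, neg_zero]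
  add_mem' := fun ha hb => by
    simp only [Set.mem_setOf_eq, map_add] at *; rw [ha, hb]; abel
  neg_mem' := fun ha => by
    simp only [Set.mem_setOf_eq, map_neg] at *; rw [ha]

@[simp] lemma mem_fixSub {x : ZMod q} : x ∈ fixSub ι ↔ ι x = x := Iff.rfl
@[simp] lemma mem_negSub {x : ZMod q} : x ∈ negSub ι ↔ ι x = -x := Iff.rfl

lemma half_smul (hodd : Odd q) (x : ZMod q) : ((q + 1) / 2 : ℕ) • (x + x) = x := by
  have h2 : 2 * ((q + 1) / 2) = q + 1 := by
    obtain ⟨t, ht⟩ := hodd; omega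
  calc ((q + 1) / 2 : ℕ) • (x + x) = ((2 * ((q + 1) / 2) : ℕ) : ZMod q) * x := by
        push_cast [nsmul_eq_mul]; ring
    _ = x := by rw [h2]; push_cast [ZMod.natCast_self]; ring

variable (hι : ∀ x, ι (ι x) = x) (hodd : Odd q)

/-- The decomposition of `ZMod q` into fixed and anti-fixed parts. -/
def decomp : ZMod q ≃+ fixSub ι × negSub ι where
  toFun x := (⟨((q + 1) / 2 : ℕ) • (x + ι x), by
      simp only [mem_fixSub, map_nsmul, map_add, hι]; rw [add_comm (ι x) x]⟩,
    ⟨((q + 1) / 2 : ℕ) • (x - ι x), by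
      simp only [mem_negSub, map_nsmul, map_sub, hι]; rw [← smul_neg, neg_sub]⟩)
  invFun p := (p.1 : ZMod q) + (p.2 : ZMod q)
  left_inv x := by
    show ((q + 1) / 2 : ℕ) • (x + ι x) + ((q + 1) / 2 : ℕ) • (x - ι x) = x
    rw [← smul_add, show (x + ι x) + (x - ι x) = x + x by ring, half_smul hodd]
  right_inv := fun ⟨⟨a, ha⟩, ⟨b, hb⟩⟩ => by
    have ha' : ι a = a := ha
    have hb' : ι b = -b := hb
    refine Prod.ext (Subtype.ext ?_) (Subtype.ext ?_)
    · show ((q + 1) / 2 : ℕ) • ((a + b) + ι (a + b)) = a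
      rw [map_add, ha', hb', show (a + b) + (a + -b) = a + a by ring, half_smul hodd]
    · show ((q + 1) / 2 : ℕ) • ((a + b) - ι (a + b)) = b
      rw [map_add, ha', hb', show (a + b) - (a + -b) = b + b by ring, half_smul hodd]
  map_add' x y := by
    refine Prod.ext (Subtype.ext ?_) (Subtype.ext ?_)
    · show ((q + 1) / 2 : ℕ) • ((x + y) + ι (x + y))
        = ((q + 1) / 2 : ℕ) • (x + ι x) + ((q + 1) / 2 : ℕ) • (y + ι y)
      rw [← smul_add, map_add]; congr 1; ring
    · show ((q + 1) / 2 : ℕ) • ((x + y) - ι (x + y))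
        = ((q + 1) / 2 : ℕ) • (x - ι x) + ((q + 1) / 2 : ℕ) • (y - ι y)
      rw [← smul_add, map_add]; congr 1; ring

lemma decomp_iota (x : ZMod q) :
    decomp ι hι hodd (ι x) = ((decomp ι hι hodd x).1, -(decomp ι hι hodd x).2) := by
  refine Prod.ext (Subtype.ext ?_) (Subtype.ext ?_)
  · show ((q + 1) / 2 : ℕ) • (ι x + ι (ι x)) = ((q + 1) / 2 : ℕ) • (x + ι x)
    rw [hι, add_comm (ι x) x]
  · show ((q + 1) / 2 : ℕ) • (ι x - ι (ι x)) = -(((q + 1) / 2 : ℕ) • (x - ι x))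
    rw [hι, ← smul_neg, neg_sub]

lemma decomp_symm_apply (p : fixSub ι × negSub ι) :
    (decomp ι hι hodd).symm p = (p.1 : ZMod q) + (p.2 : ZMod q) := rfl

lemma decomp_coe_fst (a : fixSub ι) : decomp ι hι hodd (a : ZMod q) = (a, 0) := by
  have h := (decomp ι hι hodd).apply_symm_apply (a, 0)
  rwa [decomp_symm_apply, ZeroMemClass.coe_zero, add_zero] at h

lemma decomp_coe_snd (b : negSub ι) : decomp ι hι hodd (b : ZMod q) = (0, b) := by
  have h := (decomp ι hι hodd).apply_symm_apply (0, b)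
  rwa [decomp_symm_apply, ZeroMemClass.coe_zero, zero_add] at h

end Aux
/-- Let `q` be an odd positive integer and `ι` an automorphism of `ZMod q` with
`ι ∘ ι = id`. Let `Γ` be the semidirect product `(ZMod q) ⋊ (ZMod 4)` with respect to the
homomorphism `ZMod 4 → Aut(ZMod q)` sending the generator `1` to `ι`. Let `m` be the order of the
fixed-point subgroup `{x | ι x = x}` of `ι`. Then `Γ` is isomorphic to the direct product
`(ZMod m) × ((ZMod (q/m)) ⋊ (ZMod 4))`, where in the second factor the generator `1` of `ZMod 4`
acts on `ZMod (q/m)` by the inversion automorphism `x ↦ -x`. -/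
theorem semidirect_product_splits_as_product
    (q : ℕ) (hq : 0 < q) (hodd : Odd q)
    (ι : ZMod q ≃+ ZMod q) (hι : ∀ x : ZMod q, ι (ι x) = x)
    (φ : Multiplicative (ZMod 4) →* MulAut (Multiplicative (ZMod q)))
    (hφ : ∀ x : ZMod q, φ (ofAdd 1) (ofAdd x) = ofAdd (ι x))
    (m : ℕ) (hm : m = Nat.card {x : ZMod q // ι x = x}) :
    ∃ ψ : Multiplicative (ZMod 4) →* MulAut (Multiplicative (ZMod (q / m))),
      (∀ y : ZMod (q / m), ψ (ofAdd 1) (ofAdd y) = ofAdd (-y)) ∧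
      Nonempty ((Multiplicative (ZMod q) ⋊[φ] Multiplicative (ZMod 4)) ≃*
        Multiplicative (ZMod m) ×
          (Multiplicative (ZMod (q / m)) ⋊[ψ] Multiplicative (ZMod 4))) := by
  haveI : NeZero q := ⟨hq.ne'⟩
  -- cardinalities
  have hmF : m = Nat.card (fixSub ι) := by
    rw [hm]; exact Nat.card_congr (Equiv.subtypeEquivRight fun x => Iff.rfl)
  have hm0 : 0 < m := by
    rw [hmF]; exact Nat.card_pos
  have hcards : Nat.card (ZMod q) = Nat.card (fixSub ι) * Nat.card (negSub ι) := by
    rw [Nat.card_congr (decomp ι hι hodd).toEquiv, Nat.card_prod]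
  have hq2 : q = Nat.card (fixSub ι) * Nat.card (negSub ι) := by
    rwa [Nat.card_zmod] at hcards
  have h1 : q = Nat.card (negSub ι) * m := by rw [hmF, mul_comm]; exact hq2
  have hNcard : Nat.card (negSub ι) = q / m := (Nat.div_eq_of_eq_mul_left hm0 h1).symm
  -- the cyclic isomorphisms
  let eF : ZMod m ≃+ fixSub ι := addEquivOfAddCyclicCardEq (by rw [Nat.card_zmod]; exact hmF)
  let eN : ZMod (q / m) ≃+ negSub ι := addEquivOfAddCyclicCardEq (by rw [Nat.card_zmod]; exact hNcard.symm)
  -- the negation automorphism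
  let ν : MulAut (Multiplicative (ZMod (q / m))) :=
    AddEquiv.toMultiplicative (AddEquiv.neg (ZMod (q / m)))
  have hνap : ∀ y : ZMod (q / m), ν (ofAdd y) = ofAdd (-y) := fun y => rfl
  have hν2 : ν * ν = 1 := by
    ext z
    show ν (ν z) = z
    rw [← ofAdd_toAdd z, hνap, hνap, neg_neg]
  have hν2' : ν ^ (2 : ℕ) = 1 := by rw [pow_two]; exact hν2
  have hν4 : ν ^ (4 : ℕ) = 1 := by
    rw [show (4 : ℕ) = 2 * 2 from rfl, pow_mul, hν2', one_pow]
  have hcond : (zmultiplesHom _ (Additive.ofMul ν)) (4 : ℤ) = 0 := by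
    have h4 : ν ^ (4 : ℤ) = 1 := by
      rw [show (4 : ℤ) = ((4 : ℕ) : ℤ) by norm_num, zpow_natCast, hν4]
    show (4 : ℤ) • Additive.ofMul ν = 0
    rw [← ofMul_zpow, h4, ofMul_one]
  let ψ0 : ZMod 4 →+ Additive (MulAut (Multiplicative (ZMod (q / m)))) :=
    ZMod.lift 4 ⟨zmultiplesHom _ (Additive.ofMul ν), hcond⟩
  let ψ : Multiplicative (ZMod 4) →* MulAut (Multiplicative (ZMod (q / m))) :=
    AddMonoidHom.toMultiplicativeLeft ψ0
  have hψ1 : ψ (ofAdd (1 : ZMod 4)) = ν := by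
    show Additive.toMul (ψ0 (1 : ZMod 4)) = ν
    have h1 : ψ0 (1 : ZMod 4) = Additive.ofMul ν := by
      have : ((1 : ℤ) : ZMod 4) = 1 := Int.cast_one
      rw [show ψ0 = ZMod.lift 4 ⟨zmultiplesHom _ (Additive.ofMul ν), hcond⟩ from rfl, ← this,
        ZMod.lift_coe]
      simp [zmultiplesHom_apply]
    rw [h1]; rfl
  have hψap : ∀ y : ZMod (q / m), ψ (ofAdd 1) (ofAdd y) = ofAdd (-y) := by
    intro y; rw [hψ1, hνap]
  -- generator decomposition in ZMod 4
  haveI : NeZero (4 : ℕ) := ⟨by norm_num⟩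
  have hc : ∀ c : ZMod 4, ofAdd c = (ofAdd (1 : ZMod 4)) ^ c.val := by
    intro c
    rw [← ofAdd_nsmul]
    congr 1
    rw [nsmul_eq_mul, mul_one]
    exact (ZMod.natCast_rightInverse c).symm
  have hφpow : ∀ c : Multiplicative (ZMod 4), φ c = (φ (ofAdd 1)) ^ (toAdd c).val := by
    intro c
    conv_lhs => rw [← ofAdd_toAdd c, hc (toAdd c)]
    rw [map_pow]
  have hψpow : ∀ c : Multiplicative (ZMod 4), ψ c = ν ^ (toAdd c).val := by
    intro c
    conv_lhs => rw [← ofAdd_toAdd c, hc (toAdd c)]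
    rw [map_pow, hψ1]
  set D := decomp ι hι hodd with hD
  have hDiota : ∀ x : ZMod q, D (ι x) = ((D x).1, -(D x).2) := by
    intro x; rw [hD]; exact decomp_iota ι hι hodd x
  have hDsymm : ∀ p, D.symm p = (p.1 : ZMod q) + (p.2 : ZMod q) := by
    intro p; rw [hD]; exact decomp_symm_apply ι hι hodd p
  have hDcoe1 : ∀ a : fixSub ι, D (a : ZMod q) = (a, 0) := by
    intro a; rw [hD]; exact decomp_coe_fst ι hι hodd a
  have hDcoe2 : ∀ b : negSub ι, D (b : ZMod q) = (0, b) := by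
    intro b; rw [hD]; exact decomp_coe_snd ι hι hodd b
  -- key induction
  have key : ∀ (n : ℕ) (x : ZMod q),
      eF.symm (D (toAdd (((φ (ofAdd 1)) ^ n) (ofAdd x)))).1 = eF.symm (D x).1 ∧
      ofAdd (eN.symm (D (toAdd (((φ (ofAdd 1)) ^ n) (ofAdd x)))).2)
        = (ν ^ n) (ofAdd (eN.symm (D x).2)) := by
    intro n
    induction n with
    | zero => intro x; simp
    | succ n ih =>
      intro x
      have hstep : ((φ (ofAdd 1)) ^ (n + 1)) (ofAdd x) = ((φ (ofAdd 1)) ^ n) (ofAdd (ι x)) := by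
        rw [pow_succ, MulAut.mul_apply, hφ]
      rw [hstep]
      obtain ⟨ih1, ih2⟩ := ih (ι x)
      constructor
      · rw [ih1, hDiota]
      · rw [ih2, hDiota, pow_succ, MulAut.mul_apply, hνap]
        simp [map_neg]
  have L : ∀ (c : Multiplicative (ZMod 4)) (z : Multiplicative (ZMod q)),
      eF.symm (D (toAdd (φ c z))).1 = eF.symm (D (toAdd z)).1 ∧
      ofAdd (eN.symm (D (toAdd (φ c z))).2) = ψ c (ofAdd (eN.symm (D (toAdd z)).2)) := by
    intro c z
    rw [hφpow c, hψpow c]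
    have h := key ((toAdd c).val) (toAdd z)
    rwa [ofAdd_toAdd] at h
  refine ⟨ψ, hψap, ⟨{
    toFun := fun g => (ofAdd (eF.symm (D (toAdd g.left)).1),
      ⟨ofAdd (eN.symm (D (toAdd g.left)).2), g.right⟩),
    invFun := fun p => ⟨ofAdd ((eF (toAdd p.1) : ZMod q) + (eN (toAdd p.2.left) : ZMod q)),
      p.2.right⟩,
    left_inv := ?_, right_inv := ?_, map_mul' := ?_ }⟩⟩
  · intro g
    refine SemidirectProduct.ext ?_ rfl
    show ofAdd ((eF (eF.symm (D (toAdd g.left)).1) : ZMod q)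
      + (eN (eN.symm (D (toAdd g.left)).2) : ZMod q)) = g.left
    rw [eF.apply_symm_apply, eN.apply_symm_apply, ← hDsymm, D.symm_apply_apply, ofAdd_toAdd]
  · rintro ⟨a, b, c⟩
    have hsum : D ((eF (toAdd a) : ZMod q) + (eN (toAdd b) : ZMod q))
        = (eF (toAdd a), eN (toAdd b)) := by
      rw [map_add, hDcoe1, hDcoe2, Prod.mk_add_mk, add_zero, zero_add]
    refine Prod.ext ?_ (SemidirectProduct.ext ?_ rfl)
    · show ofAdd (eF.symm (D ((eF (toAdd a) : ZMod q) + (eN (toAdd b) : ZMod q))).1) = a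
      rw [hsum, eF.symm_apply_apply, ofAdd_toAdd]
    · show ofAdd (eN.symm (D ((eF (toAdd a) : ZMod q) + (eN (toAdd b) : ZMod q))).2) = b
      rw [hsum, eN.symm_apply_apply, ofAdd_toAdd]
  · intro g₁ g₂
    obtain ⟨hL1, hL2⟩ := L g₁.right g₂.left
    refine Prod.ext ?_ (SemidirectProduct.ext ?_ rfl)
    · show ofAdd (eF.symm (D (toAdd (g₁ * g₂).left)).1)
        = ofAdd (eF.symm (D (toAdd g₁.left)).1) * ofAdd (eF.symm (D (toAdd g₂.left)).1)
      rw [SemidirectProduct.mul_left, ← ofAdd_add]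
      congr 1
      show eF.symm (D (toAdd g₁.left + toAdd (φ g₁.right g₂.left))).1 = _
      rw [map_add, Prod.fst_add, map_add, hL1]
    · show ofAdd (eN.symm (D (toAdd (g₁ * g₂).left)).2)
        = ofAdd (eN.symm (D (toAdd g₁.left)).2) * ψ g₁.right (ofAdd (eN.symm (D (toAdd g₂.left)).2))
      rw [SemidirectProduct.mul_left, ← hL2]
      show ofAdd (eN.symm (D (toAdd g₁.left + toAdd (φ g₁.right g₂.left))).2) = _
      rw [map_add, Prod.snd_add, map_add, ofAdd_add]
end

section
/- Let n be an odd positive integer and let Γ be the semidirect product (ZMod n) ⋊ (ZMod 4) with respect to the homomorphism ZMod 4 → Aut(ZMod n) sending the generator 1 to the inversion automorphism x ↦ -x. Then there exists an injective group homomorphism from Γ into the special unitary group SU(2) = Matrix.specialUnitaryGroup (Fin 2) ℂ. -/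
/-!
Send `x : ZMod n` to `diag(ζ^x, ζ^-x)` with `ζ = exp(2πi/n)`, and the generator of `ZMod 4` to
`j = !![0, 1; -1, 0]`, which has order 4 and conjugates every diagonal matrix of `SU(2)` to its
inverse; this is exactly the twisting by `x ↦ -x`, so the two maps assemble to a homomorphism on
the semidirect product. It is injective because both pieces are, and their images meet trivially:
their orders divide `n` and `4`, which are coprime as `n` is odd.
-/

open Multiplicative

namespace SemidirectProduct

variable {N G H : Type*} [Group N] [Group G] [Group H] {φ : G →* MulAut N}

theorem lift_injective {fn : N →* H} {fg : G →* H}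
    {h : ∀ g, fn.comp (φ g).toMonoidHom = (MulAut.conj (fg g)).toMonoidHom.comp fn}
    (hn : Function.Injective fn) (hg : Function.Injective fg)
    (hdisj : Disjoint fn.range fg.range) : Function.Injective (lift fn fg h) := by
  refine (injective_iff_map_eq_one _).mpr fun x hx => ?_
  rw [← inl_left_mul_inr_right x, map_mul, lift_inl, lift_inr, mul_eq_one_iff_eq_inv,
    ← map_inv] at hx
  have hleft : fn x.left = 1 :=
    Subgroup.disjoint_def.mp hdisj ⟨x.left, rfl⟩ ⟨x.right⁻¹, hx.symm⟩
  have hright : fg x.right⁻¹ = 1 := hx ▸ hleft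
  ext
  · exact (map_eq_one_iff fn hn).mp hleft
  · exact inv_eq_one.mp ((map_eq_one_iff fg hg).mp hright)

theorem lift_compat_of_forall_pow_eq {fn : N →* H} {fg : G →* H} {g₀ : G}
    (hg₀ : ∀ g : G, ∃ k : ℕ, g₀ ^ k = g)
    (h : ∀ n, fn (φ g₀ n) = fg g₀ * fn n * (fg g₀)⁻¹) :
    ∀ g, fn.comp (φ g).toMonoidHom = (MulAut.conj (fg g)).toMonoidHom.comp fn := by
  suffices ∀ (k : ℕ) n, fn (φ (g₀ ^ k) n) = fg (g₀ ^ k) * fn n * (fg (g₀ ^ k))⁻¹ by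
    intro g
    obtain ⟨k, rfl⟩ := hg₀ g
    exact MonoidHom.ext (this k)
  intro k
  induction k with
  | zero => simp
  | succ k ih =>
    intro n
    simp only [pow_succ, map_mul, MulAut.mul_apply, ih, h, mul_inv_rev, mul_assoc]

end SemidirectProduct

theorem ZMod.exists_ofAdd_one_pow_eq (k : ℕ) [NeZero k] (g : Multiplicative (ZMod k)) :
    ∃ m : ℕ, ofAdd (1 : ZMod k) ^ m = g :=
  ⟨(toAdd g).val, by rw [← ofAdd_nsmul, nsmul_one, ZMod.natCast_zmod_val, ofAdd_toAdd]⟩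

theorem exists_injective_zmodHom_of_orderOf_eq {G : Type*} [Group G] {g : G} {k : ℕ}
    (hg : orderOf g = k) :
    ∃ f : Multiplicative (ZMod k) →* G, Function.Injective f ∧ f (ofAdd 1) = g := by
  have hgen : ∀ x : Subgroup.zpowers g,
      x ∈ Subgroup.zpowers ⟨g, Subgroup.mem_zpowers g⟩ := by
    rintro ⟨_, i, rfl⟩
    exact ⟨i, Subtype.ext (by simp)⟩
  let e := zmodMulEquivOfGenerator hgen ((Nat.card_zpowers g).trans hg)
  exact ⟨(Subgroup.zpowers g).subtype.comp e.toMonoidHom,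
    Subtype.val_injective.comp e.injective, by simp [e]⟩

section SpecialUnitaryFinTwo

open Matrix

noncomputable def Circle.toSU2 : Circle →* specialUnitaryGroup (Fin 2) ℂ where
  toFun z := ⟨!![(z : ℂ), 0; 0, ↑z⁻¹], by
    refine mem_specialUnitaryGroup_iff.mpr ⟨mem_unitaryGroup_iff.mpr ?_, by simp⟩
    ext i j
    fin_cases i <;> fin_cases j <;>
      simp [star_eq_conjTranspose, vecMul, dotProduct, Fin.sum_univ_two,
        ← Circle.coe_inv_eq_conj]⟩
  map_one' := by ext i j; fin_cases i <;> fin_cases j <;> simp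
  map_mul' z w := by ext i j; fin_cases i <;> fin_cases j <;> simp [mul_comm]

theorem Circle.toSU2_injective : Function.Injective Circle.toSU2 := fun z w h =>
  Circle.ext (by simpa [Circle.toSU2] using congr_fun₂ (congr_arg Subtype.val h) 0 0)

/-- The unit quaternion `j`, under the identification of `SU(2)` with the unit quaternions. -/
def jSU2 : specialUnitaryGroup (Fin 2) ℂ := ⟨!![0, 1; -1, 0], by
  refine mem_specialUnitaryGroup_iff.mpr ⟨mem_unitaryGroup_iff.mpr ?_, by simp⟩
  ext i j
  fin_cases i <;> fin_cases j <;>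
    simp [star_eq_conjTranspose, vecMul, dotProduct, Fin.sum_univ_two]⟩

theorem jSU2_mul_toSU2_mul_inv (z : Circle) : jSU2 * z.toSU2 * jSU2⁻¹ = z.toSU2⁻¹ := by
  rw [← map_inv]
  ext i j
  fin_cases i <;> fin_cases j <;>
    simp [jSU2, Circle.toSU2, ← star_eq_inv, star_eq_conjTranspose, vecMul, dotProduct,
      Fin.sum_univ_two]

theorem jSU2_sq : jSU2 ^ 2 = Circle.toSU2 (-1) := by
  ext i j
  fin_cases i <;> fin_cases j <;> simp [jSU2, Circle.toSU2, sq]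

theorem orderOf_jSU2 : orderOf jSU2 = 4 := by
  refine orderOf_eq_prime_pow (p := 2) (n := 1) ?_ ?_
  · rw [pow_one, jSU2_sq, ← map_one Circle.toSU2, Circle.toSU2_injective.eq_iff]
    exact Circle.neg_ne_self 1
  · rw [show 2 ^ (1 + 1) = 2 * 2 from rfl, pow_mul, jSU2_sq, ← map_pow]
    simp

end SpecialUnitaryFinTwo

theorem semidirect_product_embeds_in_SU2_general
    (n : ℕ) (hodd : Odd n)
    (φ : Multiplicative (ZMod 4) →* MulAut (Multiplicative (ZMod n)))
    (hφ : ∀ x : ZMod n, φ (ofAdd 1) (ofAdd x) = ofAdd (-x)) :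
    ∃ f : (Multiplicative (ZMod n) ⋊[φ] Multiplicative (ZMod 4)) →*
        Matrix.specialUnitaryGroup (Fin 2) ℂ,
      Function.Injective f := by
  have : NeZero n := ⟨hodd.pos.ne'⟩
  let α := Circle.toSU2.comp (ZMod.toCircle (N := n)).toMonoidHom
  obtain ⟨β, hβ_inj, hβ_one⟩ := exists_injective_zmodHom_of_orderOf_eq orderOf_jSU2
  have hcompat := SemidirectProduct.lift_compat_of_forall_pow_eq (φ := φ) (fn := α) (fg := β)
    (ZMod.exists_ofAdd_one_pow_eq 4) fun m => by
      rw [hβ_one, show φ (ofAdd 1) m = m⁻¹ from hφ (toAdd m), map_inv]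
      exact (jSU2_mul_toSU2_mul_inv _).symm
  have hcard : (Nat.card α.range).Coprime (Nat.card β.range) :=
    Nat.Coprime.of_dvd ((Subgroup.card_range_dvd α).trans (Nat.card_zmod n).dvd)
      ((Subgroup.card_range_dvd β).trans (Nat.card_zmod 4).dvd)
      (hodd.coprime_two_right.pow_right 2)
  exact ⟨SemidirectProduct.lift α β hcompat, SemidirectProduct.lift_injective
    (Circle.toSU2_injective.comp ZMod.injective_toCircle) hβ_inj
    (Subgroup.disjoint_of_coprime_natCard hcard)⟩

/-- Let `n` be an odd positive integer and let `Γ` be the semidirect product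
`(ZMod n) ⋊ (ZMod 4)` with respect to the homomorphism `ZMod 4 → Aut(ZMod n)` sending the
generator `1` to the inversion automorphism `x ↦ -x`. Then there exists an injective group
homomorphism from `Γ` into `SU(2) = Matrix.specialUnitaryGroup (Fin 2) ℂ`. -/
theorem semidirect_product_embeds_in_SU2
    (n : ℕ) (hn : 0 < n) (hodd : Odd n)
    (φ : Multiplicative (ZMod 4) →* MulAut (Multiplicative (ZMod n)))
    (hφ : ∀ x : ZMod n, φ (ofAdd 1) (ofAdd x) = ofAdd (-x)) :
    ∃ f : (Multiplicative (ZMod n) ⋊[φ] Multiplicative (ZMod 4)) →*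
        Matrix.specialUnitaryGroup (Fin 2) ℂ,
      Function.Injective f :=
  semidirect_product_embeds_in_SU2_general n hodd φ hφ
end

section
/- Let q be an odd positive integer and let ι be an automorphism of ZMod q with ι ∘ ι = id. Let Γ be the semidirect product (ZMod q) ⋊ (ZMod 4) with respect to the homomorphism ZMod 4 → Aut(ZMod q) sending the generator 1 to ι. Then there exists an injective group homomorphism φ : Γ → U(2) = Matrix.unitaryGroup (Fin 2) ℂ such that for every g ∈ Γ with g ≠ 1 and every nonzero vector v ∈ ℂ², we have (φ g) • v ≠ v; in other words, the induced linear action of Γ on the unit sphere of ℂ² is free. -/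
/-!
Let `χ` be a faithful character of `ZMod q`. Send `a` to `D a = diag (χ a, χ (ι a))` and the
generator of `ZMod 4` to the quarter turn `J = !![0, 1; -1, 0]`. Conjugation by `J` swaps the
diagonal entries and `ι` is an involution, so `D (ι a) * J = J * D a` and these assignments define
a representation of the semidirect product in `U(2)`. The element `(a, k)` acts by `D a * J ^ k`,
and `det (D a * J ^ k - 1)` is `(χ a - 1) * (χ (ι a) - 1)`, `1 + χ (a + ι a)` or
`(χ a + 1) * (χ (ι a) + 1)` according as `k = 0`, `k` is odd or `k = 2`. None of these vanishes
for `(a, k) ≠ 1`: `χ` is injective, and since `q` is odd, `χ` never takes the value `-1`.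
Injectivity follows from freeness, since `f g = 1` fixes every vector.
-/

open Multiplicative Matrix

lemma AddChar.apply_ne_neg_one {A M : Type*} [AddMonoid A] [Monoid M] [HasDistribNeg M]
    (hM : (-1 : M) ≠ 1) (ψ : AddChar A M) {n : ℕ} (hn : Odd n) {a : A} (ha : n • a = 0) :
    ψ a ≠ -1 := by
  intro h
  have := ψ.map_nsmul_eq_pow n a
  rw [ha, AddChar.map_zero_eq_one, h, hn.neg_one_pow] at this
  exact hM this.symm

namespace ZMod

lemma stdAddChar_ne_neg_one {q : ℕ} [NeZero q] (hq : Odd q) (a : ZMod q) : stdAddChar a ≠ -1 :=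
  (stdAddChar (N := q)).apply_ne_neg_one (by norm_num) hq (by simp)

lemma stdAddChar_ne_one {q : ℕ} [NeZero q] {a : ZMod q} (ha : a ≠ 0) : stdAddChar a ≠ 1 := by
  rw [← AddChar.map_zero_eq_one (stdAddChar (N := q))]
  exact injective_stdAddChar.ne ha

end ZMod

namespace Matrix

variable {n : Type*} [Fintype n] [DecidableEq n]

lemma diagonal_mem_unitaryGroup (d : n → Circle) :
    diagonal (fun i ↦ (d i : ℂ)) ∈ unitaryGroup n ℂ := by
  rw [mem_unitaryGroup_iff', star_eq_conjTranspose, diagonal_conjTranspose,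
    diagonal_mul_diagonal, ← diagonal_one]
  congr 1
  ext i
  simp [Complex.conj_mul', Circle.norm_coe]

variable (n) in
noncomputable def diagonalUnitaryHom : (n → Circle) →* unitaryGroup n ℂ where
  toFun d := ⟨diagonal fun i ↦ (d i : ℂ), diagonal_mem_unitaryGroup d⟩
  map_one' := Subtype.ext <| by simp
  map_mul' d e := Subtype.ext (diagonal_mul_diagonal _ _).symm

lemma mulVec_ne_self_of_det_sub_one_ne_zero {R : Type*} [CommRing R] [IsDomain R]
    {M : Matrix n n R} (hM : (M - 1).det ≠ 0) {v : n → R} (hv : v ≠ 0) : M *ᵥ v ≠ v := by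
  intro hfix
  refine hM (exists_mulVec_eq_zero_iff.mp ⟨v, hv, ?_⟩)
  rw [sub_mulVec, hfix, one_mulVec, sub_self]

end Matrix

lemma injective_of_forall_mulVec_ne_self {G n R : Type*} [Group G] [Fintype n] [DecidableEq n]
    [CommRing R] [StarRing R] [Nontrivial (n → R)] (f : G →* unitaryGroup n R)
    (hf : ∀ g ≠ 1, ∀ v : n → R, v ≠ 0 → (f g : Matrix n n R) *ᵥ v ≠ v) :
    Function.Injective f := by
  refine (injective_iff_map_eq_one f).mpr fun g hg ↦ ?_
  by_contra hne
  obtain ⟨v, hv⟩ := exists_ne (0 : n → R)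
  exact hf g hne v hv (by rw [hg, Matrix.UnitaryGroup.one_val, one_mulVec])

noncomputable def ZMod.powHom {G : Type*} [Monoid G] (n : ℕ) [NeZero n] (g : G)
    (hg : g ^ n = 1) :
    Multiplicative (ZMod n) →* G where
  toFun k := g ^ (toAdd k).val
  map_one' := by simp
  map_mul' k l := by rw [toAdd_mul, ZMod.val_add, ← pow_eq_pow_mod _ hg, pow_add]

lemma ZMod.ofAdd_one_pow_val {n : ℕ} [NeZero n] (k : Multiplicative (ZMod n)) :
    ofAdd (1 : ZMod n) ^ (toAdd k).val = k := by
  rw [← ofAdd_nsmul, nsmul_one, ZMod.natCast_zmod_val, ofAdd_toAdd]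

section
variable {N G H : Type*} [Group N] [Group G] [Group H] {φ : G →* MulAut N}
  (fn : N →* H) (fg : G →* H)

lemma SemidirectProduct.lift_condition_of_powers {g₀ : G} (hg₀ : ∀ g, ∃ k : ℕ, g₀ ^ k = g)
    (h : ∀ n, fn (φ g₀ n) * fg g₀ = fg g₀ * fn n) (g : G) :
    fn.comp (φ g).toMonoidHom = (MulAut.conj (fg g)).toMonoidHom.comp fn := by
  obtain ⟨k, rfl⟩ := hg₀ g
  ext n
  change fn (φ (g₀ ^ k) n) = fg (g₀ ^ k) * fn n * (fg (g₀ ^ k))⁻¹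
  rw [eq_mul_inv_iff_mul_eq, map_pow φ, map_pow fg]
  induction k generalizing n with
  | zero => simp
  | succ k ih =>
    rw [pow_succ, MulAut.mul_apply, pow_succ, ← mul_assoc, ih, mul_assoc, h, mul_assoc]
end

namespace Matrix

def quarterTurn : Matrix (Fin 2) (Fin 2) ℂ := !![0, 1; -1, 0]

lemma quarterTurn_mem_unitaryGroup : quarterTurn ∈ unitaryGroup (Fin 2) ℂ := by
  rw [mem_unitaryGroup_iff]
  ext i j
  fin_cases i <;> fin_cases j <;> simp [quarterTurn, mul_apply, Fin.sum_univ_two]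

lemma quarterTurn_sq : quarterTurn ^ 2 = -1 := by
  ext i j
  fin_cases i <;> fin_cases j <;> simp [quarterTurn, sq, mul_apply, Fin.sum_univ_two]

lemma diagonal_swap_mul_quarterTurn (x y : ℂ) :
    diagonal ![y, x] * quarterTurn = quarterTurn * diagonal ![x, y] := by
  ext i j
  fin_cases i <;> fin_cases j <;> simp [quarterTurn, mul_apply, Fin.sum_univ_two]

lemma det_diagonal_mul_quarterTurn_pow_sub_one (x y : ℂ) :
    (diagonal ![x, y] * quarterTurn ^ 0 - 1).det = (x - 1) * (y - 1) ∧
    (diagonal ![x, y] * quarterTurn ^ 1 - 1).det = 1 + x * y ∧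
    (diagonal ![x, y] * quarterTurn ^ 2 - 1).det = (x + 1) * (y + 1) ∧
    (diagonal ![x, y] * quarterTurn ^ 3 - 1).det = 1 + x * y := by
  refine ⟨?_, ?_, ?_, ?_⟩ <;>
    simp [det_fin_two, quarterTurn, pow_succ, mul_apply, Fin.sum_univ_two]
  all_goals ring

end Matrix

section
variable {q : ℕ} [NeZero q] (ι : ZMod q ≃+ ZMod q)

noncomputable def diagonalCharHom : Multiplicative (ZMod q) →* unitaryGroup (Fin 2) ℂ :=
  (diagonalUnitaryHom (Fin 2)).comp <| MonoidHom.pi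
    ![ZMod.toCircle.toMonoidHom, (ZMod.toCircle.compAddMonoidHom ι.toAddMonoidHom).toMonoidHom]

lemma coe_diagonalCharHom (a : Multiplicative (ZMod q)) :
    (diagonalCharHom ι a : Matrix (Fin 2) (Fin 2) ℂ) =
      diagonal ![ZMod.stdAddChar a.toAdd, ZMod.stdAddChar (ι a.toAdd)] := by
  ext i j
  fin_cases i <;> fin_cases j <;> rfl

noncomputable def quarterTurnHom : Multiplicative (ZMod 4) →* unitaryGroup (Fin 2) ℂ :=
  ZMod.powHom 4 ⟨quarterTurn, quarterTurn_mem_unitaryGroup⟩ <| Subtype.ext <| by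
    rw [SubmonoidClass.coe_pow, show 4 = 2 * 2 from rfl, pow_mul, quarterTurn_sq]
    simp

lemma coe_quarterTurnHom (k : Multiplicative (ZMod 4)) :
    (quarterTurnHom k : Matrix (Fin 2) (Fin 2) ℂ) = quarterTurn ^ (toAdd k).val :=
  SubmonoidClass.coe_pow _ _

variable {ι} (hι : ∀ x, ι (ι x) = x)
  {φ : Multiplicative (ZMod 4) →* MulAut (Multiplicative (ZMod q))}
  (hφ : ∀ x : ZMod q, φ (ofAdd 1) (ofAdd x) = ofAdd (ι x))
include hι hφ

lemma diagonalCharHom_conj_quarterTurnHom (n : Multiplicative (ZMod q)) :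
    diagonalCharHom ι (φ (ofAdd 1) n) * quarterTurnHom (ofAdd 1) =
      quarterTurnHom (ofAdd 1) * diagonalCharHom ι n := by
  apply Subtype.ext
  rw [MulMemClass.coe_mul, MulMemClass.coe_mul, coe_quarterTurnHom, ← ofAdd_toAdd n, hφ,
    coe_diagonalCharHom, coe_diagonalCharHom]
  simp only [toAdd_ofAdd, hι, ZMod.val_one'' (by decide : 4 ≠ 1), pow_one]
  exact diagonal_swap_mul_quarterTurn _ _

noncomputable def unitaryRep : Multiplicative (ZMod q) ⋊[φ] Multiplicative (ZMod 4) →*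
    unitaryGroup (Fin 2) ℂ :=
  SemidirectProduct.lift (diagonalCharHom ι) quarterTurnHom <|
    SemidirectProduct.lift_condition_of_powers _ _ (fun k ↦ ⟨_, ZMod.ofAdd_one_pow_val k⟩)
      (diagonalCharHom_conj_quarterTurnHom hι hφ)

lemma coe_unitaryRep (g : Multiplicative (ZMod q) ⋊[φ] Multiplicative (ZMod 4)) :
    (unitaryRep hι hφ g : Matrix (Fin 2) (Fin 2) ℂ) =
      diagonal ![ZMod.stdAddChar g.left.toAdd, ZMod.stdAddChar (ι g.left.toAdd)] *
        quarterTurn ^ (toAdd g.right).val := by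
  rw [← coe_diagonalCharHom, ← coe_quarterTurnHom]
  rfl

theorem det_unitaryRep_sub_one_ne_zero (hq : Odd q)
    {g : Multiplicative (ZMod q) ⋊[φ] Multiplicative (ZMod 4)} (hg : g ≠ 1) :
    ((unitaryRep hι hφ g : Matrix (Fin 2) (Fin 2) ℂ) - 1).det ≠ 0 := by
  set a := g.left.toAdd
  obtain ⟨h0, h1, h2, h3⟩ := det_diagonal_mul_quarterTurn_pow_sub_one
    (ZMod.stdAddChar a) (ZMod.stdAddChar (ι a))
  have hsum : 1 + ZMod.stdAddChar a * ZMod.stdAddChar (ι a) ≠ 0 := by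
    rw [← AddChar.map_add_eq_mul, add_comm, Ne, add_eq_zero_iff_eq_neg]
    exact ZMod.stdAddChar_ne_neg_one hq _
  have hk : ∀ k : ZMod 4, k = 0 ∨ k = 1 ∨ k = 2 ∨ k = 3 := by decide
  rw [coe_unitaryRep]
  rcases hk g.right.toAdd with hk | hk | hk | hk <;> rw [hk]
  · have ha : a ≠ 0 := fun ha ↦ hg (SemidirectProduct.ext ha hk)
    rw [ZMod.val_zero, h0]
    exact mul_ne_zero (sub_ne_zero.mpr (ZMod.stdAddChar_ne_one ha))
      (sub_ne_zero.mpr (ZMod.stdAddChar_ne_one ((map_ne_zero_iff ι ι.injective).mpr ha)))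
  · exact h1 ▸ hsum
  · rw [show (2 : ZMod 4).val = 2 from rfl, h2]
    have hne : ∀ b : ZMod q, ZMod.stdAddChar b + 1 ≠ 0 := fun b ↦ by
      simpa [add_eq_zero_iff_eq_neg] using ZMod.stdAddChar_ne_neg_one hq b
    exact mul_ne_zero (hne a) (hne (ι a))
  · exact h3 ▸ hsum

end

theorem semidirect_product_acts_freely_via_U2_general
    (q : ℕ) (hodd : Odd q)
    (ι : ZMod q ≃+ ZMod q) (hι : ∀ x : ZMod q, ι (ι x) = x)
    (φ : Multiplicative (ZMod 4) →* MulAut (Multiplicative (ZMod q)))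
    (hφ : ∀ x : ZMod q, φ (ofAdd 1) (ofAdd x) = ofAdd (ι x)) :
    ∃ f : (Multiplicative (ZMod q) ⋊[φ] Multiplicative (ZMod 4)) →*
        Matrix.unitaryGroup (Fin 2) ℂ,
      Function.Injective f ∧
      ∀ g : Multiplicative (ZMod q) ⋊[φ] Multiplicative (ZMod 4), g ≠ 1 →
        ∀ v : Fin 2 → ℂ, v ≠ 0 → Matrix.mulVec (f g : Matrix (Fin 2) (Fin 2) ℂ) v ≠ v := by
  have : NeZero q := ⟨hodd.pos.ne'⟩
  have hfree : ∀ g : Multiplicative (ZMod q) ⋊[φ] Multiplicative (ZMod 4), g ≠ 1 →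
      ∀ v : Fin 2 → ℂ, v ≠ 0 → (unitaryRep hι hφ g : Matrix (Fin 2) (Fin 2) ℂ) *ᵥ v ≠ v :=
    fun g hg _ hv ↦
      mulVec_ne_self_of_det_sub_one_ne_zero (det_unitaryRep_sub_one_ne_zero hι hφ hodd hg) hv
  exact ⟨unitaryRep hι hφ, injective_of_forall_mulVec_ne_self _ hfree, hfree⟩

/-- Let `q` be an odd positive integer and `ι` an automorphism of `ZMod q` with
`ι ∘ ι = id`. Let `Γ` be the semidirect product `(ZMod q) ⋊ (ZMod 4)` with respect to the
homomorphism `ZMod 4 → Aut(ZMod q)` sending the generator `1` to `ι`. Then there exists an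
injective group homomorphism `φ : Γ → U(2)` such that for every `g ≠ 1` in `Γ` and every nonzero
vector `v ∈ ℂ²` we have `(φ g) • v ≠ v`: the induced linear action of `Γ` on the unit sphere of
`ℂ²` is free. -/
theorem semidirect_product_acts_freely_via_U2
    (q : ℕ) (hq : 0 < q) (hodd : Odd q)
    (ι : ZMod q ≃+ ZMod q) (hι : ∀ x : ZMod q, ι (ι x) = x)
    (φ : Multiplicative (ZMod 4) →* MulAut (Multiplicative (ZMod q)))
    (hφ : ∀ x : ZMod q, φ (ofAdd 1) (ofAdd x) = ofAdd (ι x)) :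
    ∃ f : (Multiplicative (ZMod q) ⋊[φ] Multiplicative (ZMod 4)) →*
        Matrix.unitaryGroup (Fin 2) ℂ,
      Function.Injective f ∧
      ∀ g : Multiplicative (ZMod q) ⋊[φ] Multiplicative (ZMod 4), g ≠ 1 →
        ∀ v : Fin 2 → ℂ, v ≠ 0 → Matrix.mulVec (f g : Matrix (Fin 2) (Fin 2) ℂ) v ≠ v :=
  semidirect_product_acts_freely_via_U2_general q hodd ι hι φ hφ
end
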